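/- Let (p_k)_{k∈ℕ} be a probability distribution on ℕ with p_k > 0 for infinitely many k, let j ∈ ℕ, and define ρ_j(x) := #{r ∈ ℕ^j : p_r ≥ 1/x} for x > 0. Then for all λ > 1 and t > 0, ∑_{r∈ℕ^j} (e^{−t p_r} − e^{−λ t p_r}) = ∫_0^t e^{−x} (ρ_j(λt/x) − ρ_j(t/x)) dx + ∫_t^{λt} e^{−x} ρ_j(λt/x) dx. -/

import Mathlib

open Filter Topology

/-- Product weight of a box `r` in generation `j`: `p_r = p_{r 0} ⋯ p_{r (j-1)}`. -/
noncomputable def prodP (p : ℕ → ℝ) (j : ℕ) (r : Fin j → ℕ) : ℝ := ∏ i, p (r i)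

/-- Counting function of generation `j`: `ρ_j(x) = #{r ∈ ℕ^j : p_r ≥ 1/x}` (as a real number). -/
noncomputable def rhoJ (p : ℕ → ℝ) (j : ℕ) (x : ℝ) : ℝ :=
  (Nat.card {r : Fin j → ℕ // 1 / x ≤ prodP p j r} : ℝ)

/-!
Each term is an integral of the density `e^{-x}` over a window:
`e^{-t p_r} - e^{-λ t p_r} = ∫_{(t p_r, λ t p_r]} e^{-x} dx`. The terms are bounded by `λ t p_r`,
which is summable, so sum and integral may be exchanged; at `x > 0` the integrand becomes `e^{-x}`
times the number of windows containing `x`, namely `ρ_j(λt/x) - ρ_j(t/x)`. Since `p_r ≤ 1`, all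
windows lie in `(0, λt]`, and `ρ_j(t/x) = 0` for `x > t`.
-/

open MeasureTheory Set Real

noncomputable def countAtLeast {ι : Type*} (q : ι → ℝ) (y : ℝ) : ℕ := Nat.card {i // y ≤ q i}

noncomputable def expOnIoc (u v : ℝ) : ℝ → ℝ := (Ioc u v).indicator fun x => exp (-x)

lemma expOnIoc_nonneg (u v x : ℝ) : 0 ≤ expOnIoc u v x :=
  indicator_nonneg (fun _ _ => (exp_pos _).le) x

lemma integrable_expOnIoc (u v : ℝ) : Integrable (expOnIoc u v) :=
  (continuous_exp.comp continuous_neg).integrableOn_Ioc.integrable_indicator measurableSet_Ioc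

lemma integral_expOnIoc {u v : ℝ} (huv : u ≤ v) :
    ∫ x, expOnIoc u v x = exp (-u) - exp (-v) := by
  rw [expOnIoc, integral_indicator measurableSet_Ioc, ← intervalIntegral.integral_of_le huv,
    intervalIntegral.integral_comp_neg fun x => exp x, integral_exp]

lemma tsum_indicator_Ioc_apply {ι : Type*} {f g : ι → ℝ} (h : ℝ → ℝ) {x : ℝ}
    (hfg : ∀ i, f i ≤ g i) (hfin : {i | x ≤ g i}.Finite) :
    ∑' i, (Ioc (f i) (g i)).indicator h x
      = ((Nat.card {i // x ≤ g i} : ℝ) - Nat.card {i // x ≤ f i}) * h x := by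
  have hsub : {i | x ≤ f i} ⊆ {i | x ≤ g i} := fun i hi => le_trans hi (hfg i)
  have hwindow : ∀ i, (Ioc (f i) (g i)).indicator h x
      = ({i | x ≤ g i} \ {i | x ≤ f i}).indicator (fun _ => h x) i := by
    intro i
    simp only [indicator_apply, mem_Ioc, Set.mem_sdiff, mem_ofPred_eq, not_le, and_comm]
  rw [tsum_congr hwindow, ← tsum_subtype, tsum_const, nsmul_eq_mul, Nat.card_coe_set_eq,
    ncard_sdiff hsub (hfin.subset hsub), Nat.cast_sub (ncard_le_ncard hsub hfin)]
  rfl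

lemma integrable_tsum_of_nonneg {α ι : Type*} [MeasurableSpace α] {μ : Measure α} [Countable ι]
    {F : ι → α → ℝ} (hF0 : ∀ i a, 0 ≤ F i a) (hF : ∀ i, Integrable (F i) μ)
    (hsum : Summable fun i => ∫ a, F i a ∂μ) : Integrable (fun a => ∑' i, F i a) μ := by
  have hmeas : ∀ i, AEMeasurable (fun a => ENNReal.ofReal (F i a)) μ :=
    fun i => (hF i).aemeasurable.ennreal_ofReal
  have hfinite : ∫⁻ a, ∑' i, ENNReal.ofReal (F i a) ∂μ ≠ ⊤ := by
    rw [lintegral_tsum hmeas, ← tsum_congr fun i =>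
      ofReal_integral_eq_lintegral_ofReal (hF i) (ae_of_all _ (hF0 i)),
      ← ENNReal.ofReal_tsum_of_nonneg (fun i => integral_nonneg (hF0 i)) hsum]
    exact ENNReal.ofReal_ne_top
  convert integrable_toReal_of_lintegral_ne_top (AEMeasurable.tsum hmeas) hfinite
    using 2 with a
  rw [ENNReal.tsum_toReal_eq fun i => ENNReal.ofReal_ne_top]
  exact tsum_congr fun i => (ENNReal.toReal_ofReal (hF0 i a)).symm

section Weights

variable {ι : Type*} {q : ι → ℝ}

lemma countAtLeast_eq_zero (hq1 : ∀ i, q i ≤ 1) {y : ℝ} (hy : 1 < y) : countAtLeast q y = 0 :=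
  have : IsEmpty {i // y ≤ q i} := ⟨fun i => absurd (hq1 i) (by linarith [i.2])⟩
  Nat.card_of_isEmpty

lemma tsum_expOnIoc_apply (hq0 : ∀ i, 0 ≤ q i) (hq : Summable q) {a b x : ℝ} (ha : 0 < a)
    (hab : a ≤ b) (hx : 0 < x) :
    ∑' i, expOnIoc (a * q i) (b * q i) x
      = exp (-x) * ((countAtLeast q (x / b) : ℝ) - countAtLeast q (x / a)) := by
  have hb : 0 < b := ha.trans_le hab
  have hfin : {i | x ≤ b * q i}.Finite := by
    simpa using (hq.mul_left b).tendsto_cofinite_zero.eventually_lt_const hx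
  unfold expOnIoc
  rw [tsum_indicator_Ioc_apply _ (fun i => mul_le_mul_of_nonneg_right hab (hq0 i)) hfin,
    mul_comm]
  simp only [countAtLeast, div_le_iff₀' ha, div_le_iff₀' hb]

lemma summable_exp_neg_mul_sub (hq0 : ∀ i, 0 ≤ q i) (hq : Summable q) {a b : ℝ} (ha : 0 ≤ a)
    (hab : a ≤ b) : Summable fun i => exp (-a * q i) - exp (-b * q i) := by
  refine (hq.mul_left b).of_nonneg_of_le (fun i => ?_) (fun i => ?_)
  · exact sub_nonneg.2 (exp_le_exp.2 (by nlinarith [hq0 i]))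
  · have h1 : exp (-a * q i) ≤ 1 := exp_le_one_iff.2 (by nlinarith [hq0 i])
    have h2 : 1 - b * q i ≤ exp (-b * q i) := by rw [neg_mul]; exact one_sub_le_exp_neg _
    linarith

theorem tsum_exp_neg_mul_sub_eq_integral [Countable ι] (hq0 : ∀ i, 0 ≤ q i)
    (hq1 : ∀ i, q i ≤ 1) (hq : Summable q) {a b : ℝ} (ha : 0 < a) (hab : a ≤ b) :
    ∑' i, (exp (-a * q i) - exp (-b * q i))
      = (∫ x in (0 : ℝ)..a,
          exp (-x) * ((countAtLeast q (x / b) : ℝ) - countAtLeast q (x / a)))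
        + ∫ x in a..b, exp (-x) * (countAtLeast q (x / b) : ℝ) := by
  set g : ι → ℝ → ℝ := fun i => expOnIoc (a * q i) (b * q i)
  have hint : ∀ i, ∫ x, g i x = exp (-a * q i) - exp (-b * q i) := fun i => by
    simp only [g, integral_expOnIoc (mul_le_mul_of_nonneg_right hab (hq0 i)), neg_mul]
  have hsum : Summable fun i => ∫ x, g i x := by
    simpa only [hint] using summable_exp_neg_mul_sub hq0 hq ha.le hab
  have hF : Integrable fun x => ∑' i, g i x :=
    integrable_tsum_of_nonneg (fun i => expOnIoc_nonneg _ _) (fun i => integrable_expOnIoc _ _) hsum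
  have hsupport : ∀ x ∉ Ioc 0 b, ∑' i, g i x = 0 := fun x hx => by
    refine (tsum_congr fun i => indicator_of_notMem (fun hxi => hx ?_) _).trans tsum_zero
    exact Ioc_subset_Ioc (mul_nonneg ha.le (hq0 i)) (by nlinarith [hq0 i, hq1 i]) hxi
  have hsum_norm : Summable fun i => ∫ x, ‖g i x‖ := hsum.congr fun i =>
    integral_congr_ae (ae_of_all _ fun x => (Real.norm_of_nonneg (expOnIoc_nonneg _ _ x)).symm)
  calc ∑' i, (exp (-a * q i) - exp (-b * q i))
      = ∫ x, ∑' i, g i x := by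
        rw [← tsum_congr hint, integral_tsum_of_summable_integral_norm
          (fun i => integrable_expOnIoc _ _) hsum_norm]
    _ = ∫ x in (0 : ℝ)..b, ∑' i, g i x := by
        rw [intervalIntegral.integral_of_le (ha.le.trans hab),
          setIntegral_eq_integral_of_forall_compl_eq_zero hsupport]
    _ = (∫ x in (0 : ℝ)..a, ∑' i, g i x) + ∫ x in a..b, ∑' i, g i x :=
        (intervalIntegral.integral_add_adjacent_intervals hF.intervalIntegrable
          hF.intervalIntegrable).symm
    _ = _ := by
        congr 1 <;> refine intervalIntegral.integral_congr_ae (ae_of_all _ fun x hx => ?_)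
        · rw [uIoc_of_le ha.le] at hx
          exact tsum_expOnIoc_apply hq0 hq ha hab hx.1
        · rw [uIoc_of_le hab] at hx
          have hxa : 1 < x / a := (one_lt_div ha).2 hx.1
          rw [tsum_expOnIoc_apply hq0 hq ha hab (ha.trans hx.1), countAtLeast_eq_zero hq1 hxa,
            Nat.cast_zero, sub_zero]

end Weights

section Generations

variable {p : ℕ → ℝ}

lemma prodP_nonneg (hp0 : ∀ k, 0 ≤ p k) (j : ℕ) (r : Fin j → ℕ) : 0 ≤ prodP p j r :=
  Finset.prod_nonneg fun _ _ => hp0 _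

lemma prodP_le_one (hp0 : ∀ k, 0 ≤ p k) (hp1 : ∀ k, p k ≤ 1) (j : ℕ) (r : Fin j → ℕ) :
    prodP p j r ≤ 1 :=
  Finset.prod_le_one (fun _ _ => hp0 _) fun _ _ => hp1 _

lemma summable_prodP (hp0 : ∀ k, 0 ≤ p k) (hp : Summable p) (j : ℕ) :
    Summable (prodP p j) := by
  induction j with
  | zero => exact Summable.of_finite
  | succ n ih =>
    rw [← (Fin.consEquiv fun _ : Fin (n + 1) => ℕ).summable_iff]
    convert hp.mul_of_nonneg ih hp0 (prodP_nonneg hp0 n) using 2 with x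
    simp [prodP, Fin.prod_univ_succ, Fin.consEquiv]

lemma rhoJ_div (j : ℕ) (c x : ℝ) : rhoJ p j (c / x) = countAtLeast (prodP p j) (x / c) := by
  rw [rhoJ, one_div_div]
  rfl

end Generations

theorem stmt12_general
    (p : ℕ → ℝ) (hp0 : ∀ k, 0 ≤ p k) (hp1 : ∑' k, p k = 1)
    (j : ℕ) (lam t : ℝ) (hlam : 1 < lam) (ht : 0 < t) :
    (∑' r : Fin j → ℕ,
        (Real.exp (-t * prodP p j r) - Real.exp (-(lam * t) * prodP p j r)))
      = (∫ x in (0 : ℝ)..t, Real.exp (-x) * (rhoJ p j (lam * t / x) - rhoJ p j (t / x)))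
        + ∫ x in t..(lam * t), Real.exp (-x) * rhoJ p j (lam * t / x) := by
  have hp : Summable p := by
    by_contra h
    simp [tsum_eq_zero_of_not_summable h] at hp1
  have hp_le : ∀ k, p k ≤ 1 := fun k => hp1 ▸ hp.le_tsum k fun i _ => hp0 i
  simp only [rhoJ_div]
  exact tsum_exp_neg_mul_sub_eq_integral (prodP_nonneg hp0 j) (prodP_le_one hp0 hp_le j)
    (summable_prodP hp0 hp j) ht (le_mul_of_one_le_left ht.le hlam.le)

theorem stmt12
    (p : ℕ → ℝ) (hp0 : ∀ k, 0 ≤ p k) (hp1 : ∑' k, p k = 1)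
    (hpinf : {k | 0 < p k}.Infinite)
    (j : ℕ) (hj : 1 ≤ j) (lam t : ℝ) (hlam : 1 < lam) (ht : 0 < t) :
    (∑' r : Fin j → ℕ,
        (Real.exp (-t * prodP p j r) - Real.exp (-(lam * t) * prodP p j r)))
      = (∫ x in (0 : ℝ)..t, Real.exp (-x) * (rhoJ p j (lam * t / x) - rhoJ p j (t / x)))
        + ∫ x in t..(lam * t), Real.exp (-x) * rhoJ p j (lam * t / x) :=
  stmt12_general p hp0 hp1 j lam t hlam ht
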